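/- Universality of truncated centrality games: for every network g and every family (C_i) of centralities each satisfying Axiom 1 (increasing), there exist thresholds (θ_i) — namely θ_i = C_i(g) for each i — such that g is an APSN of the truncated game with thresholds (θ_i). In particular, every network arises as an APSN of some truncated centrality game with increasing centralities. -/

import Mathlib

open SimpleGraph

/-- Degree of vertex `i` in network `g`. -/
noncomputable def deg {V : Type*} (g : SimpleGraph V) (i : V) : ℕ :=
  Nat.card (g.neighborSet i)

/-- The network `g` with the (missing) edge `ij` added. -/
def addE {V : Type*} (g : SimpleGraph V) (i j : V) : SimpleGraph V :=
  g ⊔ SimpleGraph.fromEdgeSet {s(i, j)}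

/-- The network `g` with the edge `ij` removed. -/
def delE {V : Type*} (g : SimpleGraph V) (i j : V) : SimpleGraph V :=
  g.deleteEdges {s(i, j)}

/-- Utility of agent `i` in the game with centralities `C` and edge cost `c`. -/
noncomputable def util {V : Type*} (C : V → SimpleGraph V → ℝ) (c : ℝ) (i : V)
    (g : SimpleGraph V) : ℝ :=
  C i g - c * (deg g i)

/-- Adding the missing edge `ij` is an improving move. -/
def ImprovingAdd {V : Type*} (C : V → SimpleGraph V → ℝ) (c : ℝ) (g : SimpleGraph V)
    (i j : V) : Prop :=
  util C c i (addE g i j) ≥ util C c i g ∧ util C c j (addE g i j) ≥ util C c j g ∧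
    (util C c i (addE g i j) > util C c i g ∨ util C c j (addE g i j) > util C c j g)

/-- Deleting the edge `ij` is an improving move. -/
def ImprovingDel {V : Type*} (C : V → SimpleGraph V → ℝ) (c : ℝ) (g : SimpleGraph V)
    (i j : V) : Prop :=
  util C c i (delE g i j) > util C c i g ∨ util C c j (delE g i j) > util C c j g

/-- `g` is pairwise stable at edge cost `c`. -/
def PairwiseStable {V : Type*} (C : V → SimpleGraph V → ℝ) (c : ℝ) (g : SimpleGraph V) : Prop :=
  (∀ i j : V, i ≠ j → ¬ g.Adj i j → ¬ ImprovingAdd C c g i j) ∧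
  (∀ i j : V, g.Adj i j → ¬ ImprovingDel C c g i j)

/-- `g` is asymptotically pairwise stable. -/
def APSN {V : Type*} (C : V → SimpleGraph V → ℝ) (g : SimpleGraph V) : Prop :=
  ∃ ε₀ : ℝ, 0 < ε₀ ∧ ∀ c : ℝ, 0 < c → c < ε₀ → PairwiseStable C c g

/-- Axiom 1: the centrality of agent `i` is increasing. -/
def Axiom1 {V : Type*} (C : V → SimpleGraph V → ℝ) (i : V) : Prop :=
  ∀ (g : SimpleGraph V) (j : V), j ≠ i → ¬ g.Adj i j → C i (addE g i j) > C i g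

/-- Axiom 1′: the centrality of agent `i` is decreasing. -/
def Axiom1' {V : Type*} (C : V → SimpleGraph V → ℝ) (i : V) : Prop :=
  ∀ (g : SimpleGraph V) (j : V), j ≠ i → ¬ g.Adj i j → C i (addE g i j) < C i g

/-- Axiom 2: the centrality of agent `i` is componentwise. -/
def Axiom2 {V : Type*} (C : V → SimpleGraph V → ℝ) (i : V) : Prop :=
  ∀ (g : SimpleGraph V) (j : V), j ≠ i → ¬ g.Adj i j →
    ((g.Reachable i j → C i (addE g i j) > C i g) ∧
     (¬ g.Reachable i j → C i (addE g i j) ≤ C i g))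

/-- Axiom 2′: the centrality of agent `i` is peripheral. -/
def Axiom2' {V : Type*} (C : V → SimpleGraph V → ℝ) (i : V) : Prop :=
  ∀ (g : SimpleGraph V) (j : V), j ≠ i → ¬ g.Adj i j →
    ((g.Reachable i j → C i (addE g i j) ≤ C i g) ∧
     (¬ g.Reachable i j → C i (addE g i j) > C i g))

/-- The centrality of agent `i` is degree homophilic with (strictly increasing) `f`. -/
def DegreeHomophilic {V : Type*} (C : V → SimpleGraph V → ℝ) (i : V) (f : ℕ → ℤ) : Prop :=
  ∀ (g : SimpleGraph V) (j : V), j ≠ i → ¬ g.Adj i j →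
    (C i (addE g i j) > C i g ↔ (deg g j : ℤ) ≤ f (deg g i))


/-!
Truncating agent `i`'s centrality at its value in `g` makes every new link worthless to `i`, so
at any positive cost no one wants to add a link. Removing a link of `g` lowers the truncated
centrality by a fixed positive amount (Axiom 1), and there are finitely many links, so below the
smallest of these gaps no one wants to cut a link either.
-/

open Filter Topology

section

variable {V : Type*}

lemma delE_comm (g : SimpleGraph V) (i j : V) : delE g i j = delE g j i := by
  simp [delE, Sym2.eq_swap]

lemma not_adj_delE (g : SimpleGraph V) (i j : V) : ¬ (delE g i j).Adj i j := by
  simp [delE]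

lemma addE_delE {g : SimpleGraph V} {i j : V} (h : g.Adj i j) : addE (delE g i j) i j = g :=
  sdiff_sup_cancel ((edge_le_iff g).2 (Or.inr h))

lemma neighborSet_addE (g : SimpleGraph V) {i j : V} (hij : i ≠ j) :
    (addE g i j).neighborSet i = insert j (g.neighborSet i) := by
  ext x
  simp only [mem_neighborSet, addE, sup_adj, fromEdgeSet_adj, Set.mem_singleton_iff,
    Set.mem_insert_iff, Sym2.eq_iff]
  grind

lemma deg_addE [Finite V] {g : SimpleGraph V} {i j : V} (hij : i ≠ j) (h : ¬ g.Adj i j) :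
    deg (addE g i j) i = deg g i + 1 := by
  rw [deg, deg, Nat.card_coe_set_eq, Nat.card_coe_set_eq, neighborSet_addE g hij,
    Set.ncard_insert_of_notMem (s := g.neighborSet i) h]

lemma util_addE [Finite V] (D : V → SimpleGraph V → ℝ) (c : ℝ) {g : SimpleGraph V} {i j : V}
    (hij : i ≠ j) (h : ¬ g.Adj i j) :
    util D c i (addE g i j) = util D c i g + (D i (addE g i j) - D i g) - c := by
  simp only [util, deg_addE hij h]
  push_cast
  ring

lemma Axiom1.apply_delE_lt {C : V → SimpleGraph V → ℝ} {i : V} (hC : Axiom1 C i)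
    {g : SimpleGraph V} {j : V} (h : g.Adj i j) : C i (delE g i j) < C i g := by
  simpa only [addE_delE h] using hC (delE g i j) j h.ne' (not_adj_delE g i j)

section Stability

variable [Finite V] {D : V → SimpleGraph V → ℝ} {g : SimpleGraph V}

lemma util_delE_le {c : ℝ} {i j : V} (h : g.Adj i j) (hc : c ≤ D i g - D i (delE g i j)) :
    util D c i (delE g i j) ≤ util D c i g := by
  have := util_addE D c h.ne (not_adj_delE g i j)
  rw [addE_delE h] at this
  linarith

lemma pairwiseStable_of_addE_le_of_le_sub_delE {c : ℝ} (hc : 0 < c)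
    (hadd : ∀ i j, i ≠ j → ¬ g.Adj i j → D i (addE g i j) ≤ D i g)
    (hdel : ∀ i j, g.Adj i j → c ≤ D i g - D i (delE g i j)) :
    PairwiseStable D c g := by
  refine ⟨fun i j hij h hmove => ?_, fun i j h hmove => ?_⟩
  · have := util_addE D c hij h
    linarith [hmove.1, hadd i j hij h]
  · have hi := util_delE_le h (hdel i j h)
    have hj := util_delE_le h.symm (hdel j i h.symm)
    rw [delE_comm] at hj
    exact hmove.elim hi.not_gt hj.not_gt

lemma apsn_of_addE_le_of_delE_lt
    (hadd : ∀ i j, i ≠ j → ¬ g.Adj i j → D i (addE g i j) ≤ D i g)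
    (hdel : ∀ i j, g.Adj i j → D i (delE g i j) < D i g) :
    APSN D g := by
  have hsmall : ∀ᶠ c in 𝓝[>] (0 : ℝ),
      ∀ p : V × V, g.Adj p.1 p.2 → c ≤ D p.1 g - D p.1 (delE g p.1 p.2) :=
    eventually_all.2 fun p => by
      by_cases h : g.Adj p.1 p.2
      · filter_upwards [nhdsWithin_le_nhds (Iio_mem_nhds (sub_pos.2 (hdel _ _ h)))]
          with c hc _ using hc.le
      · exact Eventually.of_forall fun _ h' => absurd h' h
  obtain ⟨ε₀, hε₀, hstable⟩ := (nhdsGT_basis (0 : ℝ)).eventually_iff.1 hsmall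
  exact ⟨ε₀, hε₀, fun c hc hcε => pairwiseStable_of_addE_le_of_le_sub_delE hc hadd
    fun i j h => hstable ⟨hc, hcε⟩ (i, j) h⟩

end Stability

end

theorem statement_13 {V : Type*} [Fintype V] (g : SimpleGraph V)
    (C : V → SimpleGraph V → ℝ) (hC : ∀ i, Axiom1 C i) :
    -- with thresholds θ i = C i g, the network g is an APSN of the truncated game
    ∃ θ : V → ℝ, (∀ i, θ i = C i g) ∧
      APSN (fun i h => min (C i h) (θ i)) g := by
  refine ⟨fun i => C i g, fun _ => rfl, apsn_of_addE_le_of_delE_lt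
    (fun i j _ _ => (min_le_right _ _).trans_eq (min_self _).symm) ?_⟩
  intro i j h
  have hlt := (hC i).apply_delE_lt h
  simpa only [min_self, min_eq_left hlt.le] using hlt
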